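/- The derived operation x ⋎ y := (x ⇒ y) ⇒ ((y ⇒ x) ⇒ x), where x ⇒ y := ¬x ∨ y, behaves as a classical disjunction with respect to designation: x ⋎ y is designated if and only if x is designated or y is designated; moreover ⋎ is commutative, associative and idempotent. -/
import Mathlib


inductive O3 : Type | zero | half | one
deriving DecidableEq

open O3

def oneg : O3 → O3
  | zero => one | one => zero | half => half

def oand : O3 → O3 → O3
  | half, half => half | half, one => one | half, zero => zero
  | one, half => one | one, one => one | one, zero => zero
  | zero, _ => zero

def oor : O3 → O3 → O3
  | half, half => half | half, one => one | half, zero => zero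
  | one, _ => one
  | zero, half => zero | zero, one => one | zero, zero => zero

def oimp : O3 → O3 → O3
  | half, y => y | one, y => y | zero, _ => half

/-- designated values -/
def desig (x : O3) : Prop := x = half ∨ x = one

/-- Kleene meet: minimum w.r.t. 0 < ½ < 1 -/
def kmeet : O3 → O3 → O3
  | zero, _ => zero | _, zero => zero
  | half, _ => half | _, half => half
  | one, one => one

/-- Kleene join: maximum w.r.t. 0 < ½ < 1 -/
def kjoin : O3 → O3 → O3
  | one, _ => one | _, one => one
  | half, _ => half | _, half => half
  | zero, zero => zero

/-- material implication ¬x ∨ y -/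
def bimp (x y : O3) : O3 := oor (oneg x) y

def cvee (x y : O3) : O3 := bimp (bimp x y) (bimp (bimp y x) x)

instance : Fintype O3 :=
  ⟨{O3.zero, O3.half, O3.one}, by intro x; cases x <;> simp⟩

instance : DecidablePred desig := fun x => inferInstanceAs (Decidable (_ ∨ _))

theorem cvee_classical_disjunction :
    (∀ x y : O3, desig (cvee x y) ↔ (desig x ∨ desig y)) ∧
    (∀ x y : O3, cvee x y = cvee y x) ∧
    (∀ x y z : O3, cvee (cvee x y) z = cvee x (cvee y z)) ∧
    (∀ x : O3, cvee x x = x) := by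
  refine ⟨?_, ?_, ?_, ?_⟩ <;> intro x <;> first
    | (intro y z; revert x y z; decide)
    | (intro y; revert x y; decide)
    | (revert x; decide)
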